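/- arXiv:1001.0330 — 2 statements merged into one kernel-verified Lean document; each statement's English description precedes it below -/
import Mathlib

section
/- For every R > 0 there exists a graph G of maximum degree at most 3 whose resolution coefficient exceeds R; that is, the resolution coefficient is unbounded on graphs of maximum degree 3. -/
open Real

noncomputable section

/-- The Euclidean plane. -/
abbrev Pt := EuclideanSpace ℝ (Fin 2)

variable {V : Type*} [Fintype V]

/-- A representation is non-edge-degenerate if endpoints of every edge are mapped
to distinct points. -/
def NED (G : SimpleGraph V) (ρ : V → Pt) : Prop := ∀ ⦃u v⦄, G.Adj u v → ρ u ≠ ρ v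

/-- Maximum edge length of a representation. -/
def maxE (G : SimpleGraph V) (ρ : V → Pt) : ℝ :=
  sSup {d | ∃ u v, G.Adj u v ∧ d = dist (ρ u) (ρ v)}

/-- Minimum edge length of a representation. -/
def minE (G : SimpleGraph V) (ρ : V → Pt) : ℝ :=
  sInf {d | ∃ u v, G.Adj u v ∧ d = dist (ρ u) (ρ v)}

/-- Maximum distance between images of two distinct vertices. -/
def maxP (ρ : V → Pt) : ℝ := sSup {d | ∃ u v : V, u ≠ v ∧ d = dist (ρ u) (ρ v)}

/-- Minimum distance between images of two distinct vertices. -/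
def minP (ρ : V → Pt) : ℝ := sInf {d | ∃ u v : V, u ≠ v ∧ d = dist (ρ u) (ρ v)}

/-- The dilation coefficient of a graph. -/
def dc (G : SimpleGraph V) : ℝ :=
  sInf {r | ∃ ρ : V → Pt, NED G ρ ∧ r = maxE G ρ / minE G ρ}

/-- The plane-width of a graph. -/
def pw (G : SimpleGraph V) : ℝ :=
  sInf {r | ∃ ρ : V → Pt, NED G ρ ∧ r = maxP ρ / minE G ρ}

/-- The resolution coefficient of a graph. -/
def re (G : SimpleGraph V) : ℝ :=
  sInf {r | ∃ ρ : V → Pt, Function.Injective ρ ∧ r = maxE G ρ / minP ρ}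

/-!
Heap-index a complete binary tree on `2 ^ k` vertices; every vertex is within `k` edges of the
root. In an injective plane representation with minimum pairwise distance `m` and maximum edge
length `B`, all vertices lie within `k * B` of the root, and the disjoint balls of radius `m / 2`
around them fit in a ball of radius `k * B + m / 2`. Comparing areas gives
`2 ^ k ≤ (2 * k * B / m + 1) ^ 2`, so `B / m` grows like `2 ^ (k / 2) / k`.
-/

open Metric MeasureTheory Module Function

theorem card_le_of_separated_of_dist_le {ι E : Type*} [Fintype ι] [NormedAddCommGroup E]
    [NormedSpace ℝ E] [FiniteDimensional ℝ E] (x : ι → E) (c : E) {m D : ℝ} (hm : 0 < m)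
    (hD : 0 ≤ D) (hsep : Pairwise fun i j => m ≤ dist (x i) (x j)) (hx : ∀ i, dist (x i) c ≤ D) :
    (Fintype.card ι : ℝ) ≤ ((2 * D + m) / m) ^ finrank ℝ E := by
  borelize E
  set μ : Measure E := Measure.addHaar
  set r := (2 * D + m) / m
  have hr : 0 < r := by positivity
  have hδ : 0 < m / 2 := by positivity
  have hdisj : Pairwise (Disjoint on fun i => ball (x i) (m / 2)) := fun i j hij =>
    ball_disjoint_ball (by linarith [hsep hij] : m / 2 + m / 2 ≤ dist (x i) (x j))
  have hsub : (⋃ i, ball (x i) (m / 2)) ⊆ ball c (r * (m / 2)) := by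
    refine Set.iUnion_subset fun i => ball_subset_ball' ?_
    have : r * (m / 2) = D + m / 2 := by simp only [r]; field_simp
    linarith [hx i]
  have hvol : (Fintype.card ι : ENNReal) * μ (ball 0 (m / 2)) ≤
      ENNReal.ofReal (r ^ finrank ℝ E) * μ (ball 0 (m / 2)) :=
    calc (Fintype.card ι : ENNReal) * μ (ball 0 (m / 2))
        = μ (⋃ i, ball (x i) (m / 2)) := by
          rw [measure_iUnion hdisj fun _ => measurableSet_ball, tsum_fintype]
          simp [μ.addHaar_ball_center]
      _ ≤ μ (ball c (r * (m / 2))) := measure_mono hsub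
      _ = ENNReal.ofReal (r ^ finrank ℝ E) * μ (ball 0 (m / 2)) :=
          μ.addHaar_ball_mul_of_pos c hr _
  have := (ENNReal.mul_le_mul_iff_left (measure_ball_pos μ _ hδ).ne' measure_ball_lt_top.ne).1 hvol
  exact_mod_cast ENNReal.toReal_le_of_le_ofReal (by positivity) this

theorem dist_le_walk_length_mul {V α : Type*} [PseudoMetricSpace α]
    {G : SimpleGraph V} {f : V → α} {B : ℝ} (hB : ∀ u v, G.Adj u v → dist (f u) (f v) ≤ B)
    {u v : V} (p : G.Walk u v) : dist (f u) (f v) ≤ p.length * B := by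
  induction p with
  | nil => simp
  | @cons u w v h p ih =>
    calc dist (f u) (f v) ≤ dist (f u) (f w) + dist (f w) (f v) := dist_triangle _ _ _
      _ ≤ B + p.length * B := add_le_add (hB u w h) ih
      _ = (SimpleGraph.Walk.cons h p).length * B := by
        rw [SimpleGraph.Walk.length_cons]; push_cast; ring

/-- The complete binary tree in heap order: vertex `j ≠ 0` has parent `(j - 1) / 2`, so the
children of `i` are `2 * i + 1` and `2 * i + 2`. -/
def heapTree (N : ℕ) : SimpleGraph (Fin N) :=
  SimpleGraph.fromRel fun i j => (j : ℕ) ≠ 0 ∧ (i : ℕ) = ((j : ℕ) - 1) / 2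

namespace heapTree

theorem adj_parent {N : ℕ} (j : Fin N) (hj : (j : ℕ) ≠ 0) :
    (heapTree N).Adj ⟨((j : ℕ) - 1) / 2, by omega⟩ j := by
  refine (SimpleGraph.fromRel_adj _ _ _).2 ⟨fun h => ?_, Or.inl ⟨hj, rfl⟩⟩
  have := congrArg Fin.val h
  simp only at this
  omega

theorem edgeSet_nonempty {N : ℕ} (hN : 1 < N) : (heapTree N).edgeSet.Nonempty :=
  ⟨s(_, _), adj_parent ⟨1, hN⟩ one_ne_zero⟩

theorem ncard_neighborSet_le {N : ℕ} (v : Fin N) : ((heapTree N).neighborSet v).ncard ≤ 3 := by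
  classical
  let nbrs : Finset ℕ := {((v : ℕ) - 1) / 2, 2 * (v : ℕ) + 1, 2 * (v : ℕ) + 2}
  have hmaps : ∀ u ∈ (heapTree N).neighborSet v, (u : ℕ) ∈ (nbrs : Set ℕ) := by
    intro u hu
    rw [SimpleGraph.mem_neighborSet, heapTree, SimpleGraph.fromRel_adj] at hu
    simp only [nbrs, Finset.coe_insert, Finset.coe_singleton, Set.mem_insert_iff,
      Set.mem_singleton_iff]
    omega
  calc ((heapTree N).neighborSet v).ncard ≤ (nbrs : Set ℕ).ncard :=
        Set.ncard_le_ncard_of_injOn _ hmaps Fin.val_injective.injOn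
    _ ≤ 3 := by rw [Set.ncard_coe_finset]; exact Finset.card_le_three

theorem exists_walk_length_le_log {N : ℕ} (hN : 0 < N) (i : Fin N) :
    ∃ p : (heapTree N).Walk i ⟨0, hN⟩, p.length ≤ Nat.log 2 (i + 1) := by
  obtain ⟨n, hn⟩ := i
  induction n using Nat.strong_induction_on with
  | _ n ih =>
    rcases Nat.eq_zero_or_pos n with rfl | hn0
    · exact ⟨.nil, by simp⟩
    obtain ⟨p, hp⟩ := ih ((n - 1) / 2) (by omega) (by omega)
    refine ⟨.cons (adj_parent ⟨n, hn⟩ hn0.ne').symm p, ?_⟩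
    have hlog : Nat.log 2 ((n - 1) / 2 + 1) = Nat.log 2 (n + 1) - 1 := by
      rw [← Nat.log_div_base]; congr 1; omega
    have : 0 < Nat.log 2 (n + 1) := Nat.log_pos one_lt_two (by omega)
    show p.length + 1 ≤ Nat.log 2 (n + 1)
    dsimp only at hp
    omega

end heapTree

theorem finite_setOf_eq_dist {V : Type*} [Finite V] (P : V → V → Prop) (ρ : V → Pt) :
    {d | ∃ u v, P u v ∧ d = dist (ρ u) (ρ v)}.Finite :=
  (Set.finite_range fun p : V × V => dist (ρ p.1) (ρ p.2)).subset <| by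
    rintro _ ⟨u, v, -, rfl⟩
    exact ⟨(u, v), rfl⟩

theorem dist_le_maxE {V : Type*} [Finite V] {G : SimpleGraph V} {ρ : V → Pt} {u v : V}
    (h : G.Adj u v) : dist (ρ u) (ρ v) ≤ maxE G ρ :=
  le_csSup (finite_setOf_eq_dist _ ρ).bddAbove ⟨u, v, h, rfl⟩

theorem maxE_nonneg {V : Type*} (G : SimpleGraph V) (ρ : V → Pt) : 0 ≤ maxE G ρ :=
  Real.sSup_nonneg fun _ ⟨_, _, _, hd⟩ => hd ▸ dist_nonneg

theorem minP_le_dist {V : Type*} {ρ : V → Pt} {u v : V} (h : u ≠ v) :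
    minP ρ ≤ dist (ρ u) (ρ v) :=
  csInf_le ⟨0, by rintro _ ⟨_, _, _, rfl⟩; exact dist_nonneg⟩ ⟨u, v, h, rfl⟩

theorem minP_nonneg {V : Type*} (ρ : V → Pt) : 0 ≤ minP ρ :=
  Real.sInf_nonneg fun _ ⟨_, _, _, hd⟩ => hd ▸ dist_nonneg

theorem minP_pos {V : Type*} [Finite V] [Nontrivial V] {ρ : V → Pt} (hρ : Injective ρ) :
    0 < minP ρ := by
  obtain ⟨u₀, v₀, h₀⟩ := exists_pair_ne V
  have hne : {d | ∃ u v : V, u ≠ v ∧ d = dist (ρ u) (ρ v)}.Nonempty := ⟨_, u₀, v₀, h₀, rfl⟩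
  obtain ⟨u, v, huv, hd⟩ := hne.csInf_mem (finite_setOf_eq_dist _ ρ)
  rw [minP, hd]
  exact dist_pos.2 (hρ.ne huv)

theorem heapTree.two_pow_le_sq_of_injective {k : ℕ} (hk : 0 < k) {ρ : Fin (2 ^ k) → Pt}
    (hρ : Injective ρ) :
    (2 : ℝ) ^ k ≤ (2 * k * (maxE (heapTree (2 ^ k)) ρ / minP ρ) + 1) ^ 2 := by
  have hN : 1 < 2 ^ k := Nat.one_lt_two_pow hk.ne'
  have : Nontrivial (Fin (2 ^ k)) := Fin.nontrivial_iff_two_le.2 hN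
  have hdepth : ∀ i, dist (ρ i) (ρ ⟨0, by omega⟩) ≤ k * maxE (heapTree (2 ^ k)) ρ := by
    intro i
    obtain ⟨p, hp⟩ := heapTree.exists_walk_length_le_log (by omega) i
    have hlog : Nat.log 2 (i + 1) ≤ k := by
      simpa [Nat.log_pow] using Nat.log_mono_right (b := 2) (show (i : ℕ) + 1 ≤ 2 ^ k from i.isLt)
    calc _ ≤ p.length * maxE (heapTree (2 ^ k)) ρ :=
          dist_le_walk_length_mul (fun _ _ => dist_le_maxE) p
      _ ≤ k * maxE (heapTree (2 ^ k)) ρ := by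
          gcongr
          · exact maxE_nonneg _ _
          · exact_mod_cast hp.trans hlog
  have := card_le_of_separated_of_dist_le ρ _ (minP_pos hρ)
    (mul_nonneg k.cast_nonneg (maxE_nonneg _ _)) (fun _ _ => minP_le_dist) hdepth
  rw [finrank_euclideanSpace_fin, Fintype.card_fin] at this
  convert this using 2
  · norm_num
  · field_simp [(minP_pos hρ).ne']

theorem exists_sq_mul_add_one_lt_two_pow {c : ℝ} (hc : 0 ≤ c) :
    ∃ k : ℕ, (c * k + 1) ^ 2 < 2 ^ k := by
  obtain ⟨n, hn⟩ := exists_nat_gt (4 * c)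
  refine ⟨4 * n, ?_⟩
  have hpow : (n : ℝ) + 1 ≤ 2 ^ n := by exact_mod_cast Nat.lt_two_pow_self (n := n)
  have hlin : c * (4 * n : ℕ) + 1 < (2 ^ n) ^ 2 := by push_cast; nlinarith
  calc (c * (4 * n : ℕ) + 1) ^ 2 < ((2 ^ n) ^ 2) ^ 2 := by gcongr
    _ = 2 ^ (4 * n) := by rw [← pow_mul, ← pow_mul]; ring

/-- For every `R > 0` there is a graph of maximum degree at most `3` (and with at
least one edge) whose resolution coefficient exceeds `R`. -/
theorem stmt_7 : ∀ R : ℝ, 0 < R → ∃ (N : ℕ) (G : SimpleGraph (Fin N)),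
    G.edgeSet.Nonempty ∧ (∀ v, (G.neighborSet v).ncard ≤ 3) ∧ R < re G := by
  intro R hR
  obtain ⟨k, hk⟩ := exists_sq_mul_add_one_lt_two_pow (c := 2 * (R + 1)) (by positivity)
  have hk0 : 0 < k := Nat.pos_of_ne_zero fun h => by simp [h] at hk
  refine ⟨2 ^ k, heapTree (2 ^ k), heapTree.edgeSet_nonempty (Nat.one_lt_two_pow hk0.ne'),
    heapTree.ncard_neighborSet_le, (lt_add_one R).trans_le (le_csInf ?_ ?_)⟩
  · refine ⟨_, fun i => !₂[(i : ℝ), 0], fun i j h => Fin.ext ?_, rfl⟩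
    simpa using congrArg (· 0) h
  rintro _ ⟨ρ, hρ, rfl⟩
  have hr := div_nonneg (maxE_nonneg (heapTree (2 ^ k)) ρ) (minP_nonneg ρ)
  have := lt_of_pow_lt_pow_left₀ 2 (by positivity)
    (hk.trans_le (heapTree.two_pow_le_sq_of_injective hk0 hρ))
  nlinarith
end
end

section
/- For every finite simple graph G with at least one edge, the one-dimensional resolution coefficient equals the bandwidth: re₁(G) = bw(G). -/
open Real

noncomputable section

variable {V : Type*} [Fintype V]

/-- One-dimensional non-edge-degeneracy. -/
def NED1 (G : SimpleGraph V) (ρ : V → ℝ) : Prop := ∀ ⦃u v⦄, G.Adj u v → ρ u ≠ ρ v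

def maxE1 (G : SimpleGraph V) (ρ : V → ℝ) : ℝ :=
  sSup {d | ∃ u v, G.Adj u v ∧ d = |ρ u - ρ v|}

def minE1 (G : SimpleGraph V) (ρ : V → ℝ) : ℝ :=
  sInf {d | ∃ u v, G.Adj u v ∧ d = |ρ u - ρ v|}

def maxP1 (ρ : V → ℝ) : ℝ := sSup {d | ∃ u v : V, u ≠ v ∧ d = |ρ u - ρ v|}

def minP1 (ρ : V → ℝ) : ℝ := sInf {d | ∃ u v : V, u ≠ v ∧ d = |ρ u - ρ v|}

/-- The one-dimensional dilation coefficient. -/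
def dc1 (G : SimpleGraph V) : ℝ :=
  sInf {r | ∃ ρ : V → ℝ, NED1 G ρ ∧ r = maxE1 G ρ / minE1 G ρ}

/-- The one-dimensional plane-width ("line-width"). -/
def pw1 (G : SimpleGraph V) : ℝ :=
  sInf {r | ∃ ρ : V → ℝ, NED1 G ρ ∧ r = maxP1 ρ / minE1 G ρ}

/-- The one-dimensional resolution coefficient. -/
def re1 (G : SimpleGraph V) : ℝ :=
  sInf {r | ∃ ρ : V → ℝ, Function.Injective ρ ∧ r = maxE1 G ρ / minP1 ρ}

/-- The bandwidth of a graph: minimum over bijections `φ : V ≃ {1,…,n}` of the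
maximum of `|φ u - φ v|` over edges `uv`. -/
def bw (G : SimpleGraph V) : ℕ :=
  sInf {k : ℕ | ∃ φ : V ≃ Fin (Fintype.card V),
    ∀ u v, G.Adj u v → (((φ u : ℕ) : ℤ) - ((φ v : ℕ) : ℤ)).natAbs ≤ k}

end

/-!
Sorting the vertices by an injective `ρ : V → ℝ` numbers them so that consecutive images are at
least `minP1 ρ` apart; hence `|ρ u - ρ v| ≥ |φ u - φ v| · minP1 ρ` for that numbering `φ`, and
`bw G ≤ maxE1 G ρ / minP1 ρ`. Conversely, a numbering realising the bandwidth, read as a map into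
`ℝ`, has `minP1 ≥ 1` and `maxE1 ≤ bw G`.
-/

variable {V : Type*}

lemma finite_setOf_abs_sub [Finite V] (p : V → V → Prop) (ρ : V → ℝ) :
    {d | ∃ u v, p u v ∧ d = |ρ u - ρ v|}.Finite :=
  (Set.finite_range fun x : V × V => |ρ x.1 - ρ x.2|).subset <| by
    rintro d ⟨u, v, _, rfl⟩
    exact ⟨(u, v), rfl⟩

lemma abs_sub_le_maxE1 [Finite V] (G : SimpleGraph V) (ρ : V → ℝ) {u v : V} (h : G.Adj u v) :
    |ρ u - ρ v| ≤ maxE1 G ρ :=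
  le_csSup (finite_setOf_abs_sub _ ρ).bddAbove ⟨u, v, h, rfl⟩

lemma maxE1_nonneg (G : SimpleGraph V) (ρ : V → ℝ) : 0 ≤ maxE1 G ρ :=
  Real.sSup_nonneg <| by
    rintro _ ⟨u, v, _, rfl⟩
    exact abs_nonneg _

lemma maxE1_le (G : SimpleGraph V) (ρ : V → ℝ) {c : ℝ} (hc : 0 ≤ c)
    (h : ∀ u v, G.Adj u v → |ρ u - ρ v| ≤ c) : maxE1 G ρ ≤ c :=
  Real.sSup_le (by rintro _ ⟨u, v, huv, rfl⟩; exact h u v huv) hc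

lemma minP1_le_abs_sub [Finite V] (ρ : V → ℝ) {u v : V} (h : u ≠ v) : minP1 ρ ≤ |ρ u - ρ v| :=
  csInf_le (finite_setOf_abs_sub _ ρ).bddBelow ⟨u, v, h, rfl⟩

lemma le_minP1 [Nontrivial V] (ρ : V → ℝ) {c : ℝ} (h : ∀ u v, u ≠ v → c ≤ |ρ u - ρ v|) :
    c ≤ minP1 ρ := by
  obtain ⟨u, v, huv⟩ := exists_pair_ne V
  refine le_csInf ⟨_, u, v, huv, rfl⟩ ?_
  rintro _ ⟨u, v, huv, rfl⟩
  exact h u v huv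

lemma minP1_pos [Finite V] [Nontrivial V] {ρ : V → ℝ} (hρ : Function.Injective ρ) :
    0 < minP1 ρ := by
  obtain ⟨u, v, huv⟩ := exists_pair_ne V
  obtain ⟨u, v, huv, hmin⟩ :=
    Set.Nonempty.csInf_mem (s := {d | ∃ u v : V, u ≠ v ∧ d = |ρ u - ρ v|}) ⟨_, u, v, huv, rfl⟩
      (finite_setOf_abs_sub _ ρ)
  rw [minP1, hmin]
  exact abs_pos.2 (sub_ne_zero.2 (hρ.ne huv))

lemma Fin.natAbs_sub_mul_le_sub {n : ℕ} {f : Fin n → ℝ} {m : ℝ}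
    (hm : ∀ i j, i < j → m ≤ f j - f i) {i j : Fin n} (hij : i ≤ j) :
    (((j : ℤ) - i).natAbs : ℝ) * m ≤ f j - f i := by
  obtain ⟨d, hd⟩ := Nat.exists_eq_add_of_le (Fin.le_def.1 hij)
  induction d generalizing j with
  | zero =>
    obtain rfl : i = j := Fin.ext hd.symm
    simp
  | succ d ih =>
    let k : Fin n := ⟨i + d, by omega⟩
    have hk : (k : ℕ) = i + d := rfl
    have hik := ih (j := k) (Fin.le_def.2 (by omega)) hk
    have hkj := hm k j (Fin.lt_def.2 (by omega))
    have hjk : ((j : ℤ) - i).natAbs = ((k : ℤ) - i).natAbs + 1 := by omega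
    rw [hjk]
    push_cast
    linarith

lemma exists_equivFin_natAbs_sub_mul_minP1_le [Fintype V] {ρ : V → ℝ} (hρ : Function.Injective ρ) :
    ∃ φ : V ≃ Fin (Fintype.card V),
      ∀ u v, (((φ u : ℤ) - φ v).natAbs : ℝ) * minP1 ρ ≤ |ρ u - ρ v| := by
  let : LinearOrder V := LinearOrder.lift' ρ hρ
  let e : Fin (Fintype.card V) ≃o V := monoEquivOfFin V rfl
  have hgap : ∀ i j, i < j → minP1 ρ ≤ ρ (e j) - ρ (e i) := fun i j hij => by
    have hlt : e i < e j := e.strictMono hij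
    have hρlt : ρ (e i) < ρ (e j) := hlt
    simpa [abs_of_pos (sub_pos.2 hρlt)] using minP1_le_abs_sub ρ hlt.ne'
  refine ⟨e.symm.toEquiv, fun u v => ?_⟩
  wlog h : e.symm v ≤ e.symm u generalizing u v
  · have := this v u (le_of_not_ge h)
    rwa [abs_sub_comm, ← Int.natAbs_neg, neg_sub] at this
  simpa using (Fin.natAbs_sub_mul_le_sub (f := ρ ∘ e) hgap h).trans (le_abs_self _)

lemma exists_equivFin_natAbs_sub_le_bw [Fintype V] (G : SimpleGraph V) :
    ∃ φ : V ≃ Fin (Fintype.card V), ∀ u v, G.Adj u v → ((φ u : ℤ) - φ v).natAbs ≤ bw G := by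
  have hne : {k : ℕ | ∃ φ : V ≃ Fin (Fintype.card V),
      ∀ u v, G.Adj u v → ((φ u : ℤ) - φ v).natAbs ≤ k}.Nonempty :=
    ⟨Fintype.card V, Fintype.equivFin V, fun u v _ => by
      have := (Fintype.equivFin V u).isLt
      have := (Fintype.equivFin V v).isLt
      omega⟩
  exact Nat.sInf_mem hne

lemma bw_le_of_natAbs_sub_le [Fintype V] (G : SimpleGraph V) (φ : V ≃ Fin (Fintype.card V)) {c : ℝ}
    (hc : 0 ≤ c) (h : ∀ u v, G.Adj u v → (((φ u : ℤ) - φ v).natAbs : ℝ) ≤ c) :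
    (bw G : ℝ) ≤ c := by
  have : bw G ≤ ⌊c⌋₊ := Nat.sInf_le ⟨φ, fun u v huv => Nat.le_floor (h u v huv)⟩
  exact (Nat.cast_le.2 this).trans (Nat.floor_le hc)

lemma bw_le_maxE1_div_minP1 [Fintype V] [Nontrivial V] (G : SimpleGraph V) {ρ : V → ℝ}
    (hρ : Function.Injective ρ) : (bw G : ℝ) ≤ maxE1 G ρ / minP1 ρ := by
  obtain ⟨φ, hφ⟩ := exists_equivFin_natAbs_sub_mul_minP1_le hρ
  have hmin := minP1_pos hρ
  refine bw_le_of_natAbs_sub_le G φ (div_nonneg (maxE1_nonneg G ρ) hmin.le) fun u v huv => ?_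
  rw [le_div_iff₀ hmin]
  exact (hφ u v).trans (abs_sub_le_maxE1 G ρ huv)

lemma bw_le_re1 [Fintype V] [Nontrivial V] (G : SimpleGraph V) : (bw G : ℝ) ≤ re1 G := by
  have hρ : Function.Injective fun v => ((Fintype.equivFin V v : ℕ) : ℝ) := fun u v h =>
    (Fintype.equivFin V).injective (Fin.ext (Nat.cast_injective h))
  refine le_csInf ⟨_, _, hρ, rfl⟩ ?_
  rintro _ ⟨ρ, hρ, rfl⟩
  exact bw_le_maxE1_div_minP1 G hρ

lemma re1_le_bw [Fintype V] [Nontrivial V] (G : SimpleGraph V) : re1 G ≤ bw G := by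
  obtain ⟨φ, hφ⟩ := exists_equivFin_natAbs_sub_le_bw G
  let ρ : V → ℝ := fun v => ((φ v : ℕ) : ℝ)
  have habs : ∀ u v, |ρ u - ρ v| = (((φ u : ℤ) - φ v).natAbs : ℝ) := fun u v => by
    simp [ρ, Nat.cast_natAbs]
  have hρ : Function.Injective ρ := fun u v h => φ.injective (Fin.ext (Nat.cast_injective h))
  have hmin : 1 ≤ minP1 ρ := le_minP1 ρ fun u v huv => by
    have : (φ u : ℕ) ≠ φ v := fun h => huv (φ.injective (Fin.ext h))
    rw [habs]
    exact_mod_cast (show 1 ≤ ((φ u : ℤ) - φ v).natAbs by omega)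
  have hmax : maxE1 G ρ ≤ bw G := maxE1_le G ρ (Nat.cast_nonneg _) fun u v huv => by
    rw [habs]
    exact_mod_cast hφ u v huv
  have hbdd : BddBelow {r | ∃ ρ : V → ℝ, Function.Injective ρ ∧ r = maxE1 G ρ / minP1 ρ} :=
    ⟨0, by rintro _ ⟨ρ, hρ, rfl⟩; exact div_nonneg (maxE1_nonneg G ρ) (minP1_pos hρ).le⟩
  calc re1 G ≤ maxE1 G ρ / minP1 ρ := csInf_le hbdd ⟨ρ, hρ, rfl⟩
    _ ≤ bw G := div_le_of_le_mul₀ (zero_le_one.trans hmin) (Nat.cast_nonneg _)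
        (hmax.trans (le_mul_of_one_le_right (Nat.cast_nonneg _) hmin))

/-- The one-dimensional resolution coefficient equals the bandwidth. -/
theorem stmt_10 {V : Type*} [Fintype V] (G : SimpleGraph V) (hG : G.edgeSet.Nonempty) :
    re1 G = (bw G : ℝ) := by
  obtain ⟨⟨u, v⟩, huv⟩ := hG
  have : Nontrivial V := ⟨⟨u, v, G.ne_of_adj huv⟩⟩
  exact le_antisymm (re1_le_bw G) (bw_le_re1 G)
end
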